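/- Let all alphabets be finite and let (A^n, U^n, S_e^n, X^n, S^n, Y^n) have a joint law of the form P_{A^n U^n}(a^n,u^n) · ∏_{i=1}^n P_{S_{e,i} S_i | A_i}(s_{e,i}, s_i | a_i) · P_{X^n | U^n S_e^n}(x^n | u^n, s_e^n) · ∏_{i=1}^n P_{Y_i | X_i S_i}(y_i | x_i, s_i) (memoryless state generation given actions and memoryless channel). Define U*_i := (A^n, U^n, S_{e,i+1}^n, Y^{i−1}) for i = 1,…,n. Then (1/n)[ I(A^n, U^n; Y^n) − I(U^n; S_e^n | A^n) ] ≤ (1/n) Σ_{i=1}^n [ I(U*_i, A_i; Y_i) − I(S_{e,i}; U*_i | A_i) ], and consequently, with Q uniform on {1,…,n} independent of everything else and U := (U*_Q, Q), A := A_Q, S_e := S_{e,Q}, Y := Y_Q, one has (1/n)[ I(A^n, U^n; Y^n) − I(U^n; S_e^n | A^n) ] ≤ I(U, A; Y) − I(U; S_e | A). -/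

import Mathlib

open Filter

noncomputable section

namespace ISAC

abbrev Vec (α : Type) (n : ℕ) : Type := Fin n → α

/-- Expectation of a real-valued function under a `PMF`. -/
def expect {α : Type} (p : PMF α) (f : α → ℝ) : ℝ :=
  ∑' a, (p a).toReal * f a

/-- Information density `log (P(x,y) / (P(x) P(y)))`. -/
def infoDensity {α β : Type} (p : PMF (α × β)) (v : α × β) : ℝ :=
  Real.log ((p v).toReal /
    (((p.map Prod.fst) v.1).toReal * ((p.map Prod.snd) v.2).toReal))

/-- Conditional information density `log (P(x,y,c) P(c) / (P(x,c) P(y,c)))`. -/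
def condInfoDensity {α β γ : Type} (p : PMF (α × β × γ)) (v : α × β × γ) : ℝ :=
  Real.log (((p v).toReal * ((p.map fun t => t.2.2) v.2.2).toReal) /
    (((p.map fun t => (t.1, t.2.2)) (v.1, v.2.2)).toReal *
      ((p.map fun t => (t.2.1, t.2.2)) (v.2.1, v.2.2)).toReal))

/-- Shannon mutual information `I(X;Y)` of a joint `PMF`. -/
def mutInfo {α β : Type} (p : PMF (α × β)) : ℝ := expect p (infoDensity p)

/-- Shannon conditional mutual information `I(X;Y|Z)` (conditioning on the third
coordinate). -/
def condMutInfo {α β γ : Type} (p : PMF (α × β × γ)) : ℝ := expect p (condInfoDensity p)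

/-- Uniform distribution on `Fin n` for `0 < n`. -/
def uniformFin (n : ℕ) (hn : 0 < n) : PMF (Fin n) :=
  haveI : Nonempty (Fin n) := ⟨⟨0, hn⟩⟩
  PMF.uniformOfFintype (Fin n)

section SingleLetterization

variable {𝒜 𝒰 𝒮e 𝒮 𝒳 𝒴 : Type} {n : ℕ}

/-- The joint law `P_{A^n U^n} ∏_i P_{S_{e,i} S_i|A_i} P_{X^n|U^n S_e^n} ∏_i P_{Y_i|X_i S_i}`
assembled from its components. -/
def convJoint (PAU : PMF (Vec 𝒜 n × Vec 𝒰 n))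
    (qn : Vec 𝒜 n → PMF (Vec 𝒮e n × Vec 𝒮 n))
    (PX : Vec 𝒰 n × Vec 𝒮e n → PMF (Vec 𝒳 n))
    (Wn : Vec 𝒳 n × Vec 𝒮 n → PMF (Vec 𝒴 n)) :
    PMF (Vec 𝒜 n × Vec 𝒰 n × Vec 𝒮e n × Vec 𝒮 n × Vec 𝒳 n × Vec 𝒴 n) :=
  PAU.bind fun au => (qn au.1).bind fun ss => (PX (au.2, ss.1)).bind fun x =>
    (Wn (x, ss.2)).map fun y => (au.1, au.2, ss.1, ss.2, x, y)

/-- The auxiliary random variable `U*_i := (A^n, U^n, S_{e,i+1}^n, Y^{i−1})`, the future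
state side information and the past outputs being encoded by masking with `Option`. -/
def Ustar (i : Fin n)
    (t : Vec 𝒜 n × Vec 𝒰 n × Vec 𝒮e n × Vec 𝒮 n × Vec 𝒳 n × Vec 𝒴 n) :
    Vec 𝒜 n × Vec 𝒰 n × Vec (Option 𝒮e) n × Vec (Option 𝒴) n :=
  (t.1, t.2.1,
    fun j => if i < j then some (t.2.2.1 j) else none,
    fun j => if j < i then some (t.2.2.2.2.2 j) else none)

end SingleLetterization

/-!
Every information quantity is rewritten through entropies `H(f) = E[-log P(f = f ω)]` of functions
of one sample, and two functions with the same fibres (equal `Setoid.ker`) have equal entropy.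

Let `G_k = (A^n, U^n, (S_{e,j})_{j ≥ k}, (Y_j)_{j < k})` (letters indexed from `0`). Then
`(U*_i, A_i, Y_i)` and `(S_{e,i}, U*_i, A_i)` carry the same information as `G_{i+1}` and `G_i`,
so the per-letter terms telescope from `G_0 ≅ (U^n, S_e^n, A^n)` to `G_n ≅ (A^n, U^n, Y^n)`: this
is the Csiszár sum identity. As `S_e^n` given `A^n` is memoryless,
`H(S_e^n | A^n) = ∑ H(S_{e,i} | A_i)`. Together,
  `I(A^n U^n; Y^n) - I(U^n; S_e^n | A^n)`
  `  = ∑ [I(U*_i A_i; Y_i) - I(S_{e,i}; U*_i | A_i) - I(Y^{i-1}; Y_i)]`,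
and dropping the nonnegative `I(Y^{i-1}; Y_i)` gives the first bound.

With the time-sharing index `Q` independent of the sample and recorded in `U`,
`I(U, A; Y) = (1/n) ∑ I(U*_i, A_i; Y_i) + I(Q; Y_Q)`, while `I(U; S_e | A)` is exactly the
average of the `I(S_{e,i}; U*_i | A_i)`, because the law of `S_{e,Q}` given `A_Q` does not
depend on `Q`.
-/

open scoped ENNReal

section Entropy

variable {Ω α β γ δ : Type}

lemma sum_coe_eq_one [Fintype α] (q : PMF α) : ∑ a, q a = 1 := by
  simpa only [tsum_fintype] using q.tsum_coe

lemma sum_toReal_eq_one [Fintype α] (q : PMF α) : ∑ a, (q a).toReal = 1 := by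
  rw [← ENNReal.toReal_sum fun a _ => q.apply_ne_top a, sum_coe_eq_one, ENNReal.toReal_one]

lemma map_fun_const (r : PMF α) (b : β) : r.map (fun _ => b) = PMF.pure b := r.map_const b

lemma ker_prodMk (f : Ω → α) (g : Ω → β) :
    Setoid.ker (fun ω => (f ω, g ω)) = Setoid.ker f ⊓ Setoid.ker g :=
  Setoid.ext fun _ _ => by simp only [Setoid.inf_iff_and, Setoid.ker_def, Prod.mk.injEq]

lemma ker_const (b : β) : Setoid.ker (fun _ : Ω => b) = ⊤ :=
  Setoid.ext fun _ _ => by simp [Setoid.ker_def]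

variable (p : PMF Ω)

def prob (f : Ω → α) (ω : Ω) : ℝ := ((p.map f) (f ω)).toReal

variable [Fintype Ω]

lemma sum_toReal_mul_congr {φ ψ : Ω → ℝ} (h : ∀ ω, p ω ≠ 0 → φ ω = ψ ω) :
    ∑ ω, (p ω).toReal * φ ω = ∑ ω, (p ω).toReal * ψ ω := by
  refine Finset.sum_congr rfl fun ω _ => ?_
  by_cases hω : p ω = 0
  · simp [hω]
  · rw [h ω hω]

open scoped Classical in
lemma toReal_map_apply (f : Ω → α) (a : α) :
    ((p.map f) a).toReal = ∑ ω, if a = f ω then (p ω).toReal else 0 := by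
  rw [PMF.map_apply, tsum_fintype,
    ENNReal.toReal_sum fun ω _ => by split <;> simp [p.apply_ne_top]]
  exact Finset.sum_congr rfl fun ω _ => by split <;> simp

lemma expect_map [Fintype α] (f : Ω → α) (φ : α → ℝ) :
    expect (p.map f) φ = ∑ ω, (p ω).toReal * φ (f ω) := by
  classical
  simp_rw [expect, tsum_fintype, toReal_map_apply, Finset.sum_mul, ite_mul, zero_mul]
  rw [Finset.sum_comm]
  simp

def entropy (f : Ω → α) : ℝ := ∑ ω, (p ω).toReal * -Real.log (prob p f ω)

lemma toReal_le_prob (f : Ω → α) (ω : Ω) : (p ω).toReal ≤ prob p f ω := by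
  classical
  rw [prob, toReal_map_apply]
  calc (p ω).toReal = if f ω = f ω then (p ω).toReal else 0 := (if_pos rfl).symm
    _ ≤ _ := Finset.single_le_sum (f := fun ω' => if f ω = f ω' then (p ω').toReal else 0)
        (fun ω' _ => by split <;> simp) (Finset.mem_univ ω)

lemma prob_pos (f : Ω → α) {ω : Ω} (hω : p ω ≠ 0) : 0 < prob p f ω :=
  (ENNReal.toReal_pos hω (p.apply_ne_top ω)).trans_le (toReal_le_prob p f ω)

lemma prob_congr {f : Ω → α} {g : Ω → β} (h : Setoid.ker f = Setoid.ker g) :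
    prob p f = prob p g := by
  classical
  funext ω
  simp only [prob, toReal_map_apply]
  refine Finset.sum_congr rfl fun ω' _ => if_congr ?_ rfl rfl
  simpa only [Setoid.ker_def] using Setoid.ext_iff.1 h ω ω'

lemma entropy_congr {f : Ω → α} {g : Ω → β} (h : Setoid.ker f = Setoid.ker g) :
    entropy p f = entropy p g := by
  rw [entropy, entropy, prob_congr p h]

lemma entropy_const (b : β) : entropy p (fun _ => b) = 0 := by
  simp [entropy, prob, map_fun_const]

lemma entropy_pair_comm (f : Ω → α) (g : Ω → β) :
    entropy p (fun ω => (f ω, g ω)) = entropy p (fun ω => (g ω, f ω)) :=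
  entropy_congr p <| by rw [ker_prodMk, ker_prodMk, inf_comm]

lemma mutInfo_map [Fintype α] [Fintype β] (f : Ω → α) (g : Ω → β) :
    mutInfo (p.map fun ω => (f ω, g ω)) =
      entropy p f + entropy p g - entropy p (fun ω => (f ω, g ω)) := by
  simp only [mutInfo, expect_map, entropy, ← Finset.sum_add_distrib, ← Finset.sum_sub_distrib,
    ← mul_add, ← mul_sub]
  refine sum_toReal_mul_congr p fun ω hω => ?_
  have hf := (prob_pos p f hω).ne'
  have hg := (prob_pos p g hω).ne'
  have hfg := (prob_pos p (fun ω => (f ω, g ω)) hω).ne'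
  rw [infoDensity, PMF.map_comp, PMF.map_comp]
  change Real.log (prob p _ ω / (prob p f ω * prob p g ω)) = _
  rw [Real.log_div hfg (mul_ne_zero hf hg), Real.log_mul hf hg]
  ring

lemma condMutInfo_map [Fintype α] [Fintype β] [Fintype γ] (f : Ω → α) (g : Ω → β)
    (h : Ω → γ) :
    condMutInfo (p.map fun ω => (f ω, g ω, h ω)) =
      entropy p (fun ω => (f ω, h ω)) + entropy p (fun ω => (g ω, h ω))
        - entropy p (fun ω => (f ω, g ω, h ω)) - entropy p h := by
  simp only [condMutInfo, expect_map, entropy, ← Finset.sum_add_distrib,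
    ← Finset.sum_sub_distrib, ← mul_add, ← mul_sub]
  refine sum_toReal_mul_congr p fun ω hω => ?_
  have hfh := (prob_pos p (fun ω => (f ω, h ω)) hω).ne'
  have hgh := (prob_pos p (fun ω => (g ω, h ω)) hω).ne'
  have hfgh := (prob_pos p (fun ω => (f ω, g ω, h ω)) hω).ne'
  have hh := (prob_pos p h hω).ne'
  rw [condInfoDensity, PMF.map_comp, PMF.map_comp, PMF.map_comp]
  change Real.log (prob p _ ω * prob p h ω / (prob p (fun ω => (f ω, h ω)) ω *
    prob p (fun ω => (g ω, h ω)) ω)) = _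
  rw [Real.log_div (mul_ne_zero hfgh hh) (mul_ne_zero hfh hgh), Real.log_mul hfgh hh,
    Real.log_mul hfh hgh]
  ring

lemma mutInfo_map_congr_left [Fintype α] [Fintype β] [Fintype δ] {f : Ω → α} {f' : Ω → δ}
    (g : Ω → β) (hf : Setoid.ker f = Setoid.ker f') :
    mutInfo (p.map fun ω => (f ω, g ω)) = mutInfo (p.map fun ω => (f' ω, g ω)) := by
  have hfg : Setoid.ker (fun ω => (f ω, g ω)) = Setoid.ker (fun ω => (f' ω, g ω)) := by
    rw [ker_prodMk, ker_prodMk, hf]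
  rw [mutInfo_map, mutInfo_map, entropy_congr p hf, entropy_congr p hfg]

lemma condMutInfo_map_swap [Fintype α] [Fintype β] [Fintype γ] [Fintype δ] {f : Ω → α}
    {f' : Ω → δ} (g : Ω → β) (h : Ω → γ) (hf : Setoid.ker f = Setoid.ker f') :
    condMutInfo (p.map fun ω => (f ω, g ω, h ω)) =
      condMutInfo (p.map fun ω => (g ω, f' ω, h ω)) := by
  have hfh : Setoid.ker (fun ω => (f ω, h ω)) = Setoid.ker (fun ω => (f' ω, h ω)) := by
    rw [ker_prodMk, ker_prodMk, hf]
  have hfgh :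
      Setoid.ker (fun ω => (f ω, g ω, h ω)) = Setoid.ker (fun ω => (g ω, f' ω, h ω)) := by
    simp only [ker_prodMk, hf, inf_left_comm]
  rw [condMutInfo_map, condMutInfo_map, entropy_congr p hfh, entropy_congr p hfgh]
  ring

lemma mutInfo_nonneg [Fintype α] [Fintype β] (q : PMF (α × β)) : 0 ≤ mutInfo q := by
  set r : α × β → ℝ := fun v => ((q.map Prod.fst) v.1).toReal * ((q.map Prod.snd) v.2).toReal
  have hr : ∑ v, r v = 1 := by
    simp only [r, Fintype.sum_prod_type, ← Finset.sum_mul_sum, sum_toReal_eq_one, one_mul]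
  have hpoint : ∀ v, (q v).toReal - r v ≤ (q v).toReal * infoDensity q v := by
    intro v
    by_cases hv : q v = 0
    · simp only [hv, ENNReal.toReal_zero, zero_sub, zero_mul, neg_nonpos, r]
      positivity
    have ha := ENNReal.toReal_pos hv (q.apply_ne_top v)
    have hrv : 0 < r v := mul_pos (prob_pos q Prod.fst hv) (prob_pos q Prod.snd hv)
    have hdens : infoDensity q v = -Real.log (r v / (q v).toReal) := by
      rw [← Real.log_inv, inv_div]
      rfl
    rw [hdens]
    calc (q v).toReal - r v = (q v).toReal * -(r v / (q v).toReal - 1) := by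
          field_simp
          ring
      _ ≤ _ := mul_le_mul_of_nonneg_left
          (neg_le_neg (Real.log_le_sub_one_of_pos (div_pos hrv ha))) ha.le
  calc (0 : ℝ) = ∑ v, ((q v).toReal - r v) := by
        rw [Finset.sum_sub_distrib, sum_toReal_eq_one, hr, sub_self]
    _ ≤ ∑ v, (q v).toReal * infoDensity q v := Finset.sum_le_sum fun v _ => hpoint v
    _ = mutInfo q := by rw [mutInfo, expect, tsum_fintype]

end Entropy

section Marginals

variable {α β : Type}

lemma map_fst_apply [Fintype α] [Fintype β] (r : PMF (α × β)) (a : α) :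
    (r.map Prod.fst) a = ∑ b, r (a, b) := by
  classical
  rw [PMF.map_apply, tsum_fintype, Fintype.sum_prod_type, Finset.sum_eq_single a]
  · simp
  · intro a' _ ha'
    simp [Ne.symm ha']
  · simp

lemma map_fst_apply_of_eq_prod {ι : Type} [Fintype ι] [DecidableEq ι] [Fintype α] [Fintype β]
    {r : PMF ((ι → α) × (ι → β))} {ρ : ι → PMF (α × β)}
    (h : ∀ x y, r (x, y) = ∏ j, ρ j (x j, y j)) (x : ι → α) :
    (r.map Prod.fst) x = ∏ j, ((ρ j).map Prod.fst) (x j) := by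
  simp only [map_fst_apply, h, Fintype.prod_sum]

lemma bind_map_prodMk_apply (π : PMF β) (κ : β → PMF α) (a : α) (b : β) :
    (π.bind fun b => (κ b).map fun x => (x, b)) (a, b) = π b * κ b a := by
  classical
  rw [PMF.bind_apply, tsum_eq_single b fun b' hb' => by simp [PMF.map_apply, Ne.symm hb']]
  simp [PMF.map_apply]

open scoped Classical in
lemma sum_pi_ite_eq {ι : Type} [Fintype ι] [Fintype α] (f : ι → α → ℝ≥0∞)
    (hf : ∀ j, ∑ a, f j a = 1) (i : ι) (a : α) :
    ∑ v : ι → α, (if a = v i then ∏ j, f j (v j) else 0) = f i a := by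
  set t : ι → Finset α := fun j => if j = i then {a} else Finset.univ
  have hmem : ∀ v : ι → α, v ∈ Fintype.piFinset t ↔ a = v i := by
    intro v
    simp only [Fintype.mem_piFinset, t]
    refine ⟨fun h => by simpa [eq_comm] using h i, ?_⟩
    rintro rfl j
    split_ifs with hj <;> simp [hj]
  calc ∑ v : ι → α, (if a = v i then ∏ j, f j (v j) else 0)
      = ∑ v ∈ Fintype.piFinset t, ∏ j, f j (v j) := by
        rw [← Finset.sum_filter]
        congr 1
        ext v
        simp [hmem]
    _ = ∏ j, ∑ b ∈ t j, f j b := (Finset.prod_univ_sum t _).symm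
    _ = f i a := by
        rw [Finset.prod_eq_single i (fun j _ hj => by simp [t, hj, hf]) (by simp)]
        simp [t]

end Marginals

section CondLaw

variable {Ω α β : Type}

def HasCondLaw (p : PMF Ω) (X : Ω → α) (Y : Ω → β) (κ : β → α → ℝ≥0∞) : Prop :=
  ∀ x y, (p.map fun ω => (X ω, Y ω)) (x, y) = (p.map Y) y * κ y x

lemma HasCondLaw.apply_coord {ι : Type} [Fintype ι] [Fintype α] [Fintype β] {p : PMF Ω}
    {X : Ω → ι → α} {Y : Ω → ι → β} {κ : β → PMF α}
    (h : HasCondLaw p X Y fun y x => ∏ j, κ (y j) (x j)) (i : ι) :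
    HasCondLaw p (fun ω => X ω i) (fun ω => Y ω i) fun b a => κ b a := by
  classical
  intro a b
  have hXi : p.map (fun ω => (X ω i, Y ω i)) =
      (p.map fun ω => (X ω, Y ω)).map fun v => (v.1 i, v.2 i) := by
    rw [PMF.map_comp]
    rfl
  have hYi : p.map (fun ω => Y ω i) = (p.map Y).map fun y => y i := by
    rw [PMF.map_comp]
    rfl
  rw [hXi, hYi, PMF.map_apply, PMF.map_apply, tsum_fintype, tsum_fintype, Finset.sum_mul,
    Fintype.sum_prod_type, Finset.sum_comm]
  refine Finset.sum_congr rfl fun y _ => ?_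
  by_cases hb : b = y i
  · subst hb
    simp only [Prod.mk.injEq, and_true, if_true]
    calc (∑ x : ι → α, if a = x i then (p.map fun ω => (X ω, Y ω)) (x, y) else 0)
        = (p.map Y) y * ∑ x : ι → α, (if a = x i then ∏ j, κ (y j) (x j) else 0) := by
          rw [Finset.mul_sum]
          refine Finset.sum_congr rfl fun x _ => ?_
          rw [h x y, mul_ite, mul_zero]
      _ = _ := by rw [sum_pi_ite_eq (fun j => κ (y j)) (fun j => sum_coe_eq_one _) i a]
  · simp [hb]

variable {p : PMF Ω}

section
variable {X : Ω → α} {Y : Ω → β} {κ : β → α → ℝ≥0∞}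

lemma HasCondLaw.prob_eq (h : HasCondLaw p X Y κ) (ω : Ω) :
    prob p (fun ω => (X ω, Y ω)) ω = prob p Y ω * (κ (Y ω) (X ω)).toReal := by
  rw [prob, h, ENNReal.toReal_mul]
  rfl

variable [Fintype Ω]

lemma HasCondLaw.toReal_ne_zero (h : HasCondLaw p X Y κ) {ω : Ω} (hω : p ω ≠ 0) :
    (κ (Y ω) (X ω)).toReal ≠ 0 :=
  right_ne_zero_of_mul (h.prob_eq ω ▸ (prob_pos p _ hω).ne')

lemma HasCondLaw.entropy_eq (h : HasCondLaw p X Y κ) :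
    entropy p (fun ω => (X ω, Y ω)) =
      entropy p Y + ∑ ω, (p ω).toReal * -Real.log (κ (Y ω) (X ω)).toReal := by
  simp only [entropy, ← Finset.sum_add_distrib, ← mul_add]
  refine sum_toReal_mul_congr p fun ω hω => ?_
  rw [h.prob_eq, Real.log_mul (prob_pos p Y hω).ne' (h.toReal_ne_zero hω)]
  ring

end

lemma HasCondLaw.entropy_sub_eq_sum [Fintype Ω] {ι : Type} [Fintype ι] [Fintype α] [Fintype β]
    {X : Ω → ι → α} {Y : Ω → ι → β} {κ : β → PMF α}
    (h : HasCondLaw p X Y fun y x => ∏ j, κ (y j) (x j)) :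
    entropy p (fun ω => (X ω, Y ω)) - entropy p Y =
      ∑ i, (entropy p (fun ω => (X ω i, Y ω i)) - entropy p (fun ω => Y ω i)) := by
  simp only [h.entropy_eq, fun i => (h.apply_coord i).entropy_eq, add_sub_cancel_left]
  rw [Finset.sum_comm]
  simp only [← Finset.mul_sum]
  refine sum_toReal_mul_congr p fun ω hω => ?_
  rw [ENNReal.toReal_prod, Real.log_prod fun j _ => (h.apply_coord j).toReal_ne_zero hω,
    Finset.sum_neg_distrib]

end CondLaw

section Mixture

variable {ι Ω α β γ : Type} (q : PMF ι) (p : PMF Ω)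

def prodPMF : PMF (ι × Ω) := q.bind fun i => p.map fun ω => (i, ω)

lemma map_prodPMF (F : ι × Ω → α) :
    (prodPMF q p).map F = q.bind fun i => p.map fun ω => F (i, ω) := by
  simp only [prodPMF, PMF.map_bind, PMF.map_comp]
  rfl

lemma prodPMF_apply (i : ι) (ω : Ω) : prodPMF q p (i, ω) = q i * p ω := by
  classical
  rw [prodPMF, PMF.bind_apply, tsum_eq_single i fun j hj => by simp [PMF.map_apply, hj.symm]]
  simp [PMF.map_apply]

lemma HasCondLaw.prodPMF {X : ι → Ω → α} {Y : ι → Ω → β} {κ : β → α → ℝ≥0∞}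
    (h : ∀ i, HasCondLaw p (X i) (Y i) κ) :
    HasCondLaw (prodPMF q p) (fun z => X z.1 z.2) (fun z => Y z.1 z.2) κ := by
  intro x y
  rw [map_prodPMF, map_prodPMF, PMF.bind_apply, PMF.bind_apply, ← ENNReal.tsum_mul_right]
  exact tsum_congr fun i => by rw [h i x y, mul_assoc]

lemma prob_prodPMF_of_tag {F : ι → Ω → α} (tag : α → ι) (htag : ∀ i ω, tag (F i ω) = i)
    (i : ι) (ω : Ω) :
    prob (prodPMF q p) (fun z => F z.1 z.2) (i, ω) = (q i).toReal * prob p (F i) ω := by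
  rw [prob, map_prodPMF, PMF.bind_apply, tsum_eq_single i, ENNReal.toReal_mul]
  · rfl
  intro j hj
  rw [PMF.map_apply, ENNReal.tsum_eq_zero.2 fun ω' => if_neg fun h => hj ?_, mul_zero]
  rw [← htag i ω, h, htag]

variable [Fintype ι] [Fintype Ω]

lemma sum_prodPMF (φ : ι × Ω → ℝ) :
    ∑ z, (prodPMF q p z).toReal * φ z = ∑ i, (q i).toReal * ∑ ω, (p ω).toReal * φ (i, ω) := by
  simp only [Fintype.sum_prod_type, prodPMF_apply, ENNReal.toReal_mul, Finset.mul_sum, mul_assoc]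

lemma entropy_prodPMF_of_tag {F : ι → Ω → α} (tag : α → ι) (htag : ∀ i ω, tag (F i ω) = i) :
    entropy (prodPMF q p) (fun z => F z.1 z.2) =
      entropy q id + ∑ i, (q i).toReal * entropy p (F i) := by
  have hprob : ∀ i, prob q id i = (q i).toReal := fun i => by simp [prob, PMF.map_id]
  simp only [entropy, sum_prodPMF, prob_prodPMF_of_tag q p tag htag, hprob,
    ← Finset.sum_add_distrib, ← mul_add]
  refine sum_toReal_mul_congr q fun i hi => ?_
  have hqi := (ENNReal.toReal_pos hi (q.apply_ne_top i)).ne'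
  calc ∑ ω, (p ω).toReal * -Real.log ((q i).toReal * prob p (F i) ω)
      = ∑ ω, (p ω).toReal * (-Real.log (q i).toReal + -Real.log (prob p (F i) ω)) :=
        sum_toReal_mul_congr p fun ω hω => by
          rw [Real.log_mul hqi (prob_pos p (F i) hω).ne']
          ring
    _ = _ := by
        simp only [mul_add, Finset.sum_add_distrib, ← Finset.sum_mul, sum_toReal_eq_one, one_mul]

variable [Fintype α] [Fintype β] [Fintype γ]

lemma mutInfo_prodPMF_of_tag {X : ι → Ω → α} (Y : ι → Ω → β) (tag : α → ι)
    (htag : ∀ i ω, tag (X i ω) = i) :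
    mutInfo ((prodPMF q p).map fun z => (X z.1 z.2, Y z.1 z.2)) =
      ∑ i, (q i).toReal * mutInfo (p.map fun ω => (X i ω, Y i ω)) +
        mutInfo ((prodPMF q p).map fun z => (z.1, Y z.1 z.2)) := by
  have hY : ∀ i, entropy p (fun ω => (i, Y i ω)) = entropy p (Y i) := fun i =>
    entropy_congr p (by rw [ker_prodMk, ker_const, top_inf_eq])
  simp only [mutInfo_map]
  rw [entropy_prodPMF_of_tag q p tag htag,
    entropy_prodPMF_of_tag q p (F := fun i ω => (X i ω, Y i ω)) (tag ∘ Prod.fst)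
      fun i ω => htag i ω,
    entropy_prodPMF_of_tag q p (F := fun i _ => i) id fun _ _ => rfl,
    entropy_prodPMF_of_tag q p (F := fun i ω => (i, Y i ω)) Prod.fst fun _ _ => rfl]
  simp only [hY, entropy_const, mul_zero, Finset.sum_const_zero, add_zero, mul_add, mul_sub,
    Finset.sum_add_distrib, Finset.sum_sub_distrib]
  ring

lemma condMutInfo_prodPMF_of_tag {X : ι → Ω → α} {Z : ι → Ω → β} {Y : ι → Ω → γ}
    (tag : α → ι) (htag : ∀ i ω, tag (X i ω) = i) {κ : γ → β → ℝ≥0∞}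
    (hZ : ∀ i, HasCondLaw p (Z i) (Y i) κ) :
    condMutInfo ((prodPMF q p).map fun z => (X z.1 z.2, Z z.1 z.2, Y z.1 z.2)) =
      ∑ i, (q i).toReal * condMutInfo (p.map fun ω => (X i ω, Z i ω, Y i ω)) := by
  simp only [condMutInfo_map, (HasCondLaw.prodPMF q p hZ).entropy_eq,
    fun i => (hZ i).entropy_eq, sum_prodPMF]
  rw [entropy_prodPMF_of_tag q p (F := fun i ω => (X i ω, Y i ω)) (tag ∘ Prod.fst)
      fun i ω => htag i ω,
    entropy_prodPMF_of_tag q p (F := fun i ω => (X i ω, Z i ω, Y i ω)) (tag ∘ Prod.fst)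
      fun i ω => htag i ω]
  simp only [mul_add, mul_sub, Finset.sum_add_distrib, Finset.sum_sub_distrib]
  ring

end Mixture

section Mask

variable {ι α : Type}

def mask (P : ι → Prop) [DecidablePred P] (v : ι → α) : ι → Option α :=
  fun j => if P j then some (v j) else none

lemma mask_eq_mask_iff {P : ι → Prop} [DecidablePred P] {v w : ι → α} :
    mask P v = mask P w ↔ ∀ j, P j → v j = w j := by
  simp only [mask, funext_iff]
  refine forall_congr' fun j => ?_
  split_ifs with hj <;> simp [hj]

lemma Fin.forall_val_lt_succ_iff {n : ℕ} {i : Fin n} {P : Fin n → Prop} :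
    (∀ j : Fin n, (j : ℕ) < i + 1 → P j) ↔ P i ∧ ∀ j, j < i → P j := by
  refine ⟨fun h => ⟨h i (Nat.lt_succ_self _), fun j hj => h j (Nat.lt_succ_of_lt hj)⟩, ?_⟩
  rintro ⟨hi, h⟩ j hj
  rcases Nat.lt_succ_iff_lt_or_eq.1 hj with hj | hj
  · exact h j hj
  · exact Fin.ext hj ▸ hi

lemma Fin.forall_le_val_iff {n : ℕ} {i : Fin n} {P : Fin n → Prop} :
    (∀ j : Fin n, (i : ℕ) ≤ j → P j) ↔ P i ∧ ∀ j, i < j → P j := by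
  refine ⟨fun h => ⟨h i le_rfl, fun j hj => h j hj.le⟩, ?_⟩
  rintro ⟨hi, h⟩ j hj
  rcases Nat.eq_or_lt_of_le hj with hj | hj
  · exact Fin.ext hj ▸ hi
  · exact h j hj

end Mask

-- The components of a sample are `(A^n, U^n, S_e^n, S^n, X^n, Y^n)`.
abbrev Sample (𝒜 𝒰 𝒮e 𝒮 𝒳 𝒴 : Type) (n : ℕ) : Type :=
  Vec 𝒜 n × Vec 𝒰 n × Vec 𝒮e n × Vec 𝒮 n × Vec 𝒳 n × Vec 𝒴 n

section Csiszar

variable {𝒜 𝒰 𝒮e 𝒮 𝒳 𝒴 : Type} {n : ℕ}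

def pastOutputs (k : ℕ) (t : Sample 𝒜 𝒰 𝒮e 𝒮 𝒳 𝒴 n) : Vec (Option 𝒴) n :=
  mask (fun j => (j : ℕ) < k) t.2.2.2.2.2

def hybrid (k : ℕ) (t : Sample 𝒜 𝒰 𝒮e 𝒮 𝒳 𝒴 n) :
    Vec 𝒜 n × Vec 𝒰 n × Vec (Option 𝒮e) n × Vec (Option 𝒴) n :=
  (t.1, t.2.1, mask (fun j => k ≤ (j : ℕ)) t.2.2.1, pastOutputs k t)

lemma Ustar_eq_mask (i : Fin n) (t : Sample 𝒜 𝒰 𝒮e 𝒮 𝒳 𝒴 n) :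
    Ustar i t = (t.1, t.2.1, mask (i < ·) t.2.2.1, mask (· < i) t.2.2.2.2.2) := rfl

variable [Fintype 𝒜] [Fintype 𝒰] [Fintype 𝒮e] [Fintype 𝒮] [Fintype 𝒳] [Fintype 𝒴]
  (p : PMF (Sample 𝒜 𝒰 𝒮e 𝒮 𝒳 𝒴 n))

lemma entropy_Ustar_output_eq_hybrid (i : Fin n) :
    entropy p (fun t => ((Ustar i t, t.1 i), t.2.2.2.2.2 i)) = entropy p (hybrid (i + 1)) :=
  entropy_congr p <| Setoid.ext fun s s' => by
    simp only [Setoid.ker_def, Ustar_eq_mask, hybrid, pastOutputs, Prod.mk.injEq,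
      mask_eq_mask_iff, Fin.forall_val_lt_succ_iff, Nat.add_one_le_iff, Fin.val_fin_lt]
    tauto

lemma entropy_state_Ustar_eq_hybrid (i : Fin n) :
    entropy p (fun t => (t.2.2.1 i, Ustar i t, t.1 i)) = entropy p (hybrid i) :=
  entropy_congr p <| Setoid.ext fun s s' => by
    simp only [Setoid.ker_def, Ustar_eq_mask, hybrid, pastOutputs, Prod.mk.injEq,
      mask_eq_mask_iff, Fin.forall_le_val_iff, Fin.val_fin_lt]
    tauto

lemma entropy_pastOutputs_output_eq (i : Fin n) :
    entropy p (fun t => (pastOutputs i t, t.2.2.2.2.2 i)) = entropy p (pastOutputs (i + 1)) :=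
  entropy_congr p <| Setoid.ext fun s s' => by
    simp only [Setoid.ker_def, pastOutputs, Prod.mk.injEq, mask_eq_mask_iff,
      Fin.forall_val_lt_succ_iff, Fin.val_fin_lt]
    tauto

lemma entropy_eq_hybrid_zero :
    entropy p (fun t => (t.2.1, t.2.2.1, t.1)) = entropy p (hybrid 0) :=
  entropy_congr p <| Setoid.ext fun s s' => by
    simp only [Setoid.ker_def, Prod.mk.injEq, hybrid, pastOutputs, mask_eq_mask_iff, zero_le,
      forall_const, Nat.not_lt_zero, false_implies, implies_true, and_true]
    simp only [← funext_iff]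
    tauto

lemma entropy_eq_hybrid_last :
    entropy p (fun t => ((t.1, t.2.1), t.2.2.2.2.2)) = entropy p (hybrid n) :=
  entropy_congr p <| Setoid.ext fun s s' => by
    have : ∀ j : Fin n, ¬ n ≤ (j : ℕ) := fun j => j.isLt.not_ge
    simp [Setoid.ker_def, hybrid, pastOutputs, mask_eq_mask_iff, this, ← funext_iff, and_assoc]

lemma entropy_eq_pastOutputs_last :
    entropy p (fun t => t.2.2.2.2.2) = entropy p (pastOutputs n) :=
  entropy_congr p <| Setoid.ext fun s s' => by
    simp [Setoid.ker_def, pastOutputs, mask_eq_mask_iff, ← funext_iff]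

lemma entropy_pastOutputs_zero : entropy p (pastOutputs 0) = 0 := by
  have h : (pastOutputs 0 : Sample 𝒜 𝒰 𝒮e 𝒮 𝒳 𝒴 n → Vec (Option 𝒴) n) = fun _ _ => none := by
    funext t j
    simp [pastOutputs, mask]
  rw [h, entropy_const]

lemma mutInfo_sub_condMutInfo_eq_sum {κ : 𝒜 → PMF 𝒮e}
    (hSe : HasCondLaw p (fun t => t.2.2.1) (fun t => t.1) fun a se => ∏ j, κ (a j) (se j)) :
    mutInfo (p.map fun t => ((t.1, t.2.1), t.2.2.2.2.2)) -
        condMutInfo (p.map fun t => (t.2.1, t.2.2.1, t.1)) =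
      ∑ i : Fin n, (mutInfo (p.map fun t => ((Ustar i t, t.1 i), t.2.2.2.2.2 i)) -
        condMutInfo (p.map fun t => (t.2.2.1 i, Ustar i t, t.1 i)) -
        mutInfo (p.map fun t => (pastOutputs i t, t.2.2.2.2.2 i))) := by
  have hletter : ∀ i : Fin n,
      mutInfo (p.map fun t => ((Ustar i t, t.1 i), t.2.2.2.2.2 i)) -
          condMutInfo (p.map fun t => (t.2.2.1 i, Ustar i t, t.1 i)) -
          mutInfo (p.map fun t => (pastOutputs i t, t.2.2.2.2.2 i)) =
        (entropy p (hybrid i) - entropy p (hybrid (i + 1))) +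
          (entropy p (pastOutputs (i + 1)) - entropy p (pastOutputs i)) -
          (entropy p (fun t => (t.2.2.1 i, t.1 i)) - entropy p (fun t => t.1 i)) := fun i => by
    rw [mutInfo_map, condMutInfo_map, mutInfo_map, entropy_Ustar_output_eq_hybrid,
      entropy_state_Ustar_eq_hybrid, entropy_pastOutputs_output_eq]
    ring
  rw [Finset.sum_congr rfl fun i _ => hletter i, Finset.sum_sub_distrib, Finset.sum_add_distrib,
    ← hSe.entropy_sub_eq_sum,
    Fin.sum_univ_eq_sum_range (fun k => entropy p (hybrid k) - entropy p (hybrid (k + 1))),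
    Fin.sum_univ_eq_sum_range
      (fun k => entropy p (pastOutputs (k + 1)) - entropy p (pastOutputs k)),
    Finset.sum_range_sub' (fun k => entropy p (hybrid k)),
    Finset.sum_range_sub (fun k => entropy p (pastOutputs k)), mutInfo_map, condMutInfo_map,
    entropy_eq_hybrid_last, entropy_eq_hybrid_zero, entropy_eq_pastOutputs_last,
    entropy_pastOutputs_zero, entropy_pair_comm p (fun t => t.1) (fun t => t.2.1)]
  ring

lemma mutInfo_sub_condMutInfo_le_sum {κ : 𝒜 → PMF 𝒮e}
    (hSe : HasCondLaw p (fun t => t.2.2.1) (fun t => t.1) fun a se => ∏ j, κ (a j) (se j)) :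
    mutInfo (p.map fun t => ((t.1, t.2.1), t.2.2.2.2.2)) -
        condMutInfo (p.map fun t => (t.2.1, t.2.2.1, t.1)) ≤
      ∑ i : Fin n, (mutInfo (p.map fun t => ((Ustar i t, t.1 i), t.2.2.2.2.2 i)) -
        condMutInfo (p.map fun t => (t.2.2.1 i, Ustar i t, t.1 i))) := by
  rw [mutInfo_sub_condMutInfo_eq_sum p hSe]
  exact Finset.sum_le_sum fun i _ => sub_le_self _ (mutInfo_nonneg _)

end Csiszar

section TimeSharing

variable {𝒜 𝒰 𝒮e 𝒮 𝒳 𝒴 : Type} [Fintype 𝒜] [Fintype 𝒰] [Fintype 𝒮e] [Fintype 𝒮] [Fintype 𝒳]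
  [Fintype 𝒴] {n : ℕ} (p : PMF (Sample 𝒜 𝒰 𝒮e 𝒮 𝒳 𝒴 n)) (hn : 0 < n)

lemma toReal_uniformFin_apply (i : Fin n) : (uniformFin n hn i).toReal = (n : ℝ)⁻¹ := by
  simp [uniformFin, PMF.uniformOfFintype_apply]

lemma le_mutInfo_timeSharing :
    (n : ℝ)⁻¹ * ∑ i : Fin n, mutInfo (p.map fun t => ((Ustar i t, t.1 i), t.2.2.2.2.2 i)) ≤
      mutInfo ((uniformFin n hn).bind fun i =>
        p.map fun t => (((Ustar i t, i), t.1 i), t.2.2.2.2.2 i)) := by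
  rw [← map_prodPMF (uniformFin n hn) p
      fun z => (((Ustar z.1 z.2, z.1), z.2.1 z.1), z.2.2.2.2.2.2 z.1),
    mutInfo_prodPMF_of_tag (uniformFin n hn) p (X := fun i t => ((Ustar i t, i), t.1 i))
      (fun i t => t.2.2.2.2.2 i) (fun x => x.1.2) fun _ _ => rfl, Finset.mul_sum]
  refine le_add_of_le_of_nonneg (Finset.sum_le_sum fun i _ => ?_) (mutInfo_nonneg _)
  rw [toReal_uniformFin_apply, mutInfo_map_congr_left p (f := fun t => ((Ustar i t, i), t.1 i))
    (f' := fun t => (Ustar i t, t.1 i)) _ (by simp only [ker_prodMk, ker_const, inf_top_eq])]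

lemma condMutInfo_timeSharing {κ : 𝒜 → 𝒮e → ℝ≥0∞}
    (hSe : ∀ i : Fin n, HasCondLaw p (fun t => t.2.2.1 i) (fun t => t.1 i) κ) :
    condMutInfo ((uniformFin n hn).bind fun i =>
        p.map fun t => ((Ustar i t, i), t.2.2.1 i, t.1 i)) =
      (n : ℝ)⁻¹ * ∑ i : Fin n, condMutInfo (p.map fun t => (t.2.2.1 i, Ustar i t, t.1 i)) := by
  rw [← map_prodPMF (uniformFin n hn) p
      fun z => ((Ustar z.1 z.2, z.1), z.2.2.2.1 z.1, z.2.1 z.1),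
    condMutInfo_prodPMF_of_tag (uniformFin n hn) p (X := fun i t => (Ustar i t, i))
      (Z := fun i t => t.2.2.1 i) (Y := fun i t => t.1 i) Prod.snd (fun _ _ => rfl) hSe,
    Finset.mul_sum]
  refine Finset.sum_congr rfl fun i _ => ?_
  rw [toReal_uniformFin_apply, condMutInfo_map_swap p (f' := Ustar i) _ _
    (by rw [ker_prodMk, ker_const, inf_top_eq])]

end TimeSharing

section Channel

variable {𝒜 𝒰 𝒮e 𝒮 𝒳 𝒴 : Type} {n : ℕ} (PAU : PMF (Vec 𝒜 n × Vec 𝒰 n))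
  (qn : Vec 𝒜 n → PMF (Vec 𝒮e n × Vec 𝒮 n)) (PX : Vec 𝒰 n × Vec 𝒮e n → PMF (Vec 𝒳 n))
  (Wn : Vec 𝒳 n × Vec 𝒮 n → PMF (Vec 𝒴 n))

lemma map_convJoint_action :
    (convJoint PAU qn PX Wn).map (fun t => t.1) = PAU.map Prod.fst := by
  simp only [convJoint, PMF.map_bind, PMF.map_comp, Function.comp_def, map_fun_const,
    PMF.bind_const]
  rfl

lemma map_convJoint_state_action :
    (convJoint PAU qn PX Wn).map (fun t => (t.2.2.1, t.1)) =
      (PAU.map Prod.fst).bind fun a => ((qn a).map Prod.fst).map fun se => (se, a) := by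
  simp only [convJoint, PMF.map_bind, PMF.map_comp, Function.comp_def, map_fun_const,
    PMF.bind_const, PMF.bind_map]
  rfl

lemma hasCondLaw_convJoint :
    HasCondLaw (convJoint PAU qn PX Wn) (fun t => t.2.2.1) (fun t => t.1)
      fun a se => ((qn a).map Prod.fst) se := by
  intro se a
  rw [map_convJoint_state_action, map_convJoint_action, bind_map_prodMk_apply]

lemma hasCondLaw_convJoint_of_memoryless [Fintype 𝒮e] [Fintype 𝒮] {qs : 𝒜 → PMF (𝒮e × 𝒮)}
    (hq : ∀ a se s, qn a (se, s) = ∏ i, qs (a i) (se i, s i)) :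
    HasCondLaw (convJoint PAU qn PX Wn) (fun t => t.2.2.1) (fun t => t.1)
      fun a se => ∏ i, ((qs (a i)).map Prod.fst) (se i) := by
  intro se a
  rw [hasCondLaw_convJoint PAU qn PX Wn se a]
  exact congrArg _ (map_fst_apply_of_eq_prod (hq a) se)

end Channel

theorem single_letterization_general
    (𝒜 𝒰 𝒮e 𝒮 𝒳 𝒴 : Type)
    [Fintype 𝒜] [Fintype 𝒰] [Fintype 𝒮e] [Fintype 𝒮] [Fintype 𝒳] [Fintype 𝒴]
    (n : ℕ) (hn : 0 < n)
    (PAU : PMF (Vec 𝒜 n × Vec 𝒰 n))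
    (qn : Vec 𝒜 n → PMF (Vec 𝒮e n × Vec 𝒮 n))
    (qs : 𝒜 → PMF (𝒮e × 𝒮))
    (PX : Vec 𝒰 n × Vec 𝒮e n → PMF (Vec 𝒳 n))
    (Wn : Vec 𝒳 n × Vec 𝒮 n → PMF (Vec 𝒴 n))
    (hq : ∀ (a : Vec 𝒜 n) (se : Vec 𝒮e n) (s : Vec 𝒮 n),
      (qn a) (se, s) = ∏ i : Fin n, (qs (a i)) (se i, s i)) :
    (n : ℝ)⁻¹ *
        (mutInfo ((convJoint PAU qn PX Wn).map fun t => ((t.1, t.2.1), t.2.2.2.2.2)) -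
          condMutInfo ((convJoint PAU qn PX Wn).map fun t => (t.2.1, t.2.2.1, t.1))) ≤
      (n : ℝ)⁻¹ * ∑ i : Fin n,
        (mutInfo ((convJoint PAU qn PX Wn).map fun t =>
            ((Ustar i t, t.1 i), t.2.2.2.2.2 i)) -
          condMutInfo ((convJoint PAU qn PX Wn).map fun t =>
            (t.2.2.1 i, Ustar i t, t.1 i))) ∧
    (n : ℝ)⁻¹ *
        (mutInfo ((convJoint PAU qn PX Wn).map fun t => ((t.1, t.2.1), t.2.2.2.2.2)) -
          condMutInfo ((convJoint PAU qn PX Wn).map fun t => (t.2.1, t.2.2.1, t.1))) ≤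
      mutInfo ((uniformFin n hn).bind fun i => (convJoint PAU qn PX Wn).map fun t =>
          (((Ustar i t, i), t.1 i), t.2.2.2.2.2 i)) -
        condMutInfo ((uniformFin n hn).bind fun i => (convJoint PAU qn PX Wn).map fun t =>
          ((Ustar i t, i), t.2.2.1 i, t.1 i)) := by
  have hSe := hasCondLaw_convJoint_of_memoryless PAU qn PX Wn hq
  have hblock := mul_le_mul_of_nonneg_left
    (mutInfo_sub_condMutInfo_le_sum _ (κ := fun a => (qs a).map Prod.fst) hSe)
    (inv_nonneg.2 n.cast_nonneg)
  refine ⟨hblock, hblock.trans ?_⟩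
  rw [condMutInfo_timeSharing _ hn (hSe.apply_coord (κ := fun a => (qs a).map Prod.fst)),
    Finset.sum_sub_distrib, mul_sub]
  exact sub_le_sub_right (le_mutInfo_timeSharing _ hn) _

/-- **Single-letterization for the converse** (via the Csiszár sum identity). For a
joint law of the form
`P_{A^n U^n} ∏_i P_{S_e S|A} P_{X^n|U^n S_e^n} ∏_i P_{Y|XS}` (stationary memoryless state
generation and channel) and `U*_i = (A^n, U^n, S_{e,i+1}^n, Y^{i−1})`,
`(1/n)[I(A^n,U^n;Y^n) − I(U^n;S_e^n|A^n)] ≤ (1/n) Σ_i [I(U*_i,A_i;Y_i) − I(S_{e,i};U*_i|A_i)]`,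
and with `Q` uniform on `{1,…,n}`, `U = (U*_Q, Q)`, `A = A_Q`, `S_e = S_{e,Q}`, `Y = Y_Q`,
the right-hand side is at most `I(U,A;Y) − I(U;S_e|A)`. -/
theorem single_letterization
    (𝒜 𝒰 𝒮e 𝒮 𝒳 𝒴 : Type)
    [Fintype 𝒜] [Fintype 𝒰] [Fintype 𝒮e] [Fintype 𝒮] [Fintype 𝒳] [Fintype 𝒴]
    (n : ℕ) (hn : 0 < n)
    (PAU : PMF (Vec 𝒜 n × Vec 𝒰 n))
    (qn : Vec 𝒜 n → PMF (Vec 𝒮e n × Vec 𝒮 n))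
    (qs : 𝒜 → PMF (𝒮e × 𝒮))
    (PX : Vec 𝒰 n × Vec 𝒮e n → PMF (Vec 𝒳 n))
    (Wn : Vec 𝒳 n × Vec 𝒮 n → PMF (Vec 𝒴 n))
    (Wc : 𝒳 × 𝒮 → PMF 𝒴)
    (hq : ∀ (a : Vec 𝒜 n) (se : Vec 𝒮e n) (s : Vec 𝒮 n),
      (qn a) (se, s) = ∏ i : Fin n, (qs (a i)) (se i, s i))
    (hW : ∀ (x : Vec 𝒳 n) (s : Vec 𝒮 n) (y : Vec 𝒴 n),
      (Wn (x, s)) y = ∏ i : Fin n, (Wc (x i, s i)) (y i)) :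
    (n : ℝ)⁻¹ *
        (mutInfo ((convJoint PAU qn PX Wn).map fun t => ((t.1, t.2.1), t.2.2.2.2.2)) -
          condMutInfo ((convJoint PAU qn PX Wn).map fun t => (t.2.1, t.2.2.1, t.1))) ≤
      (n : ℝ)⁻¹ * ∑ i : Fin n,
        (mutInfo ((convJoint PAU qn PX Wn).map fun t =>
            ((Ustar i t, t.1 i), t.2.2.2.2.2 i)) -
          condMutInfo ((convJoint PAU qn PX Wn).map fun t =>
            (t.2.2.1 i, Ustar i t, t.1 i))) ∧
    (n : ℝ)⁻¹ *
        (mutInfo ((convJoint PAU qn PX Wn).map fun t => ((t.1, t.2.1), t.2.2.2.2.2)) -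
          condMutInfo ((convJoint PAU qn PX Wn).map fun t => (t.2.1, t.2.2.1, t.1))) ≤
      mutInfo ((uniformFin n hn).bind fun i => (convJoint PAU qn PX Wn).map fun t =>
          (((Ustar i t, i), t.1 i), t.2.2.2.2.2 i)) -
        condMutInfo ((uniformFin n hn).bind fun i => (convJoint PAU qn PX Wn).map fun t =>
          ((Ustar i t, i), t.2.2.1 i, t.1 i)) :=
  single_letterization_general 𝒜 𝒰 𝒮e 𝒮 𝒳 𝒴 n hn PAU qn qs PX Wn hq

end ISAC
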